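/- arXiv:1812.05298 — 3 statements merged into one kernel-verified Lean document; each statement's English description precedes it below -/
import Mathlib

section
/- Let T > 0, b > 0, v ∈ ℝ, k ≥ 0, and let lo ≤ hi be reals with lo ≥ −v/T. Define u* = min(max(lo, (√(2 b k) − v)/T), hi). Then for every u with lo ≤ u ≤ hi, one has f(u*) ≤ f(u); that is, the clamped controller u* minimizes the estimated one-step physical regret over the feasible interval [lo, hi]. -/
/-!
In terms of the next speed `w = v + T u ≥ 0`, the regret `(w²/(2b) − k)²` decreases on
`[0, √(2bk)]` and increases beyond, so as a function of `u` it decreases up to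
`t = (√(2bk) − v)/T` and increases after it. A function with that shape attains its minimum over
an interval at the projection `min (max lo t) hi` of its turning point.
-/

open Set

theorem isMinOn_clamp {α β : Type*} [LinearOrder α] [Preorder β] {φ : α → β} {lo hi t : α}
    (hlohi : lo ≤ hi) (hanti : AntitoneOn φ (Icc lo t)) (hmono : MonotoneOn φ (Ici t)) :
    IsMinOn φ (Icc lo hi) (min (max lo t) hi) := by
  intro u ⟨hlo, hhi⟩
  rcases le_total t lo with htlo | hlot
  · rw [max_eq_left htlo, min_eq_left hlohi]
    exact hmono htlo (htlo.trans hlo) hlo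
  rw [max_eq_right hlot]
  rcases le_total t hi with hthi | hhit
  · rw [min_eq_left hthi]
    rcases le_total u t with hut | htu
    · exact hanti ⟨hlo, hut⟩ ⟨hlot, le_rfl⟩ hut
    · exact hmono le_rfl htu htu
  · rw [min_eq_right hhit]
    exact hanti ⟨hlo, hhi.trans hhit⟩ ⟨hlohi, hhit⟩ hhi

section Regret

variable {b k s : ℝ}

theorem regret_antitoneOn (hb : 0 < b) (hs : s ^ 2 = 2 * b * k) :
    AntitoneOn (fun w : ℝ => (w ^ 2 / (2 * b) - k) ^ 2) (Icc 0 s) := by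
  intro x ⟨hx0, _⟩ y ⟨_, hys⟩ hxy
  have hk : k = s ^ 2 / (2 * b) := by rw [hs]; field_simp
  have hsq : x ^ 2 / (2 * b) ≤ y ^ 2 / (2 * b) := by gcongr
  have hyk : y ^ 2 / (2 * b) ≤ k := by rw [hk]; gcongr
  dsimp only
  nlinarith

theorem regret_monotoneOn (hb : 0 < b) (hs0 : 0 ≤ s) (hs : s ^ 2 = 2 * b * k) :
    MonotoneOn (fun w : ℝ => (w ^ 2 / (2 * b) - k) ^ 2) (Ici s) := by
  intro x hsx y _ hxy
  have hk : k = s ^ 2 / (2 * b) := by rw [hs]; field_simp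
  have hkx : k ≤ x ^ 2 / (2 * b) := by rw [hk]; gcongr; exact hsx
  have hsq : x ^ 2 / (2 * b) ≤ y ^ 2 / (2 * b) := by gcongr; exact hs0.trans hsx
  dsimp only
  nlinarith

end Regret

/-- The clamped controller
`u* = min (max lo ((√(2bk) − v)/T)) hi` minimizes the estimated one-step
physical regret `f(u) = ((v + T u)²/(2b) − k)²` over the feasible interval
`[lo, hi]`, provided `T > 0`, `b > 0`, `k ≥ 0`, `lo ≤ hi`, and `lo ≥ −v/T`. -/
theorem one_step_ahead_optimal_controller
    (T b v k lo hi : ℝ) (hT : 0 < T) (hb : 0 < b) (hk : 0 ≤ k)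
    (hlohi : lo ≤ hi) (hlo : -v / T ≤ lo) :
    ∀ u : ℝ, lo ≤ u → u ≤ hi →
      ((v + T * (min (max lo ((Real.sqrt (2 * b * k) - v) / T)) hi)) ^ 2 / (2 * b) - k) ^ 2
        ≤ ((v + T * u) ^ 2 / (2 * b) - k) ^ 2 := by
  intro u hu hu'
  set s := Real.sqrt (2 * b * k)
  have hs0 : 0 ≤ s := Real.sqrt_nonneg _
  have hs : s ^ 2 = 2 * b * k := Real.sq_sqrt (by positivity)
  have hspeed : Monotone fun x : ℝ => v + T * x := fun _ _ hxy =>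
    add_le_add_right (mul_le_mul_of_nonneg_left hxy hT.le) v
  have hturn : v + T * ((s - v) / T) = s := by field_simp; ring
  have hspeed_lo : 0 ≤ v + T * lo := by
    have := (div_le_iff₀ hT).mp hlo
    linarith
  refine isMinOn_clamp hlohi
    ((regret_antitoneOn hb hs).comp_MonotoneOn (hspeed.monotoneOn _) ?_)
    ((regret_monotoneOn hb hs0 hs).comp (hspeed.monotoneOn _) ?_) ⟨hu, hu'⟩
  · exact fun x ⟨hx, hxt⟩ => ⟨hspeed_lo.trans (hspeed hx), hturn ▸ hspeed hxt⟩
  · exact fun x (hx : _ ≤ x) => show s ≤ _ from hturn ▸ hspeed hx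
end

section
/- Let T > 0, b > 0, and w ≥ 0. If (v, d) satisfies v ≥ 0, d + T w − T v ≥ 0, and g(v, d, w) = (v, d), then necessarily v = w and d = w²/(2 b); that is, (w, w²/(2 b)) is the unique equilibrium of the closed-loop dynamics in this domain. -/
theorem eq_of_add_mul_sub_mul_eq_self {T w v d : ℝ} (hT : T ≠ 0)
    (h : d + T * w - T * v = d) : v = w := by
  have : T * (w - v) = 0 := by linarith
  linarith [(mul_eq_zero.mp this).resolve_left hT]

theorem eq_sq_div_of_sqrt_mul_eq {c d v : ℝ} (hc : 0 < c) (hd : 0 ≤ d)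
    (h : √(c * d) = v) : d = v ^ 2 / c := by
  rw [eq_div_iff hc.ne', ← h, Real.sq_sqrt (by positivity), mul_comm]

theorem equilibrium_unique_general (T b w v d : ℝ) (hT : 0 < T) (hb : 0 < b)
    (hdom : 0 ≤ d + T * w - T * v)
    (heq : ((Real.sqrt (2 * b * (d + T * w - T * v)), d + T * w - T * v) : ℝ × ℝ)
      = (v, d)) :
    v = w ∧ d = w ^ 2 / (2 * b) := by
  obtain ⟨hspeed, hspacing⟩ := Prod.mk.inj heq
  have hvw : v = w := eq_of_add_mul_sub_mul_eq_self hT.ne' hspacing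
  rw [hspacing] at hspeed hdom
  exact ⟨hvw, hvw ▸ eq_sq_div_of_sqrt_mul_eq (by positivity) hdom hspeed⟩

/-- Uniqueness of the equilibrium: if `v ≥ 0`,
`d + Tw − Tv ≥ 0`, and `g(v, d, w) = (v, d)` where
`g(v, d, w) = (√(2b(d + Tw − Tv)), d + Tw − Tv)`, then `v = w` and
`d = w²/(2b)`; i.e. `(w, w²/(2b))` is the unique equilibrium in this domain. -/
theorem equilibrium_unique (T b w v d : ℝ) (hT : 0 < T) (hb : 0 < b) (hw : 0 ≤ w)
    (hv : 0 ≤ v) (hdom : 0 ≤ d + T * w - T * v)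
    (heq : ((Real.sqrt (2 * b * (d + T * w - T * v)), d + T * w - T * v) : ℝ × ℝ)
      = (v, d)) :
    v = w ∧ d = w ^ 2 / (2 * b) :=
  equilibrium_unique_general T b w v d hT hb hdom heq
end

section
/- Let T > 0 and b > 0, and define L(v, d) = (v²/(2 b) − d)². Then: (i) L(v, d) ≥ 0 for all (v, d); (ii) L(w, w²/(2 b)) = 0 for every w; and (iii) for every (v, d) and every input w with d + T w − T v ≥ 0, one has L(g(v, d, w)) = 0, and hence L(g(v, d, w)) − L(v, d) = −(v²/(2 b) − d)² ≤ 0. Consequently L is a Lyapunov function and the equilibrium (w, w²/(2 b)) is stable in the sense of Lyapunov. -/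
lemma sq_sqrt_mul_div_cancel_left {c x : ℝ} (hc : 0 < c) (hx : 0 ≤ x) :
    √(c * x) ^ 2 / c = x := by
  rw [Real.sq_sqrt (by positivity), mul_div_cancel_left₀ x hc.ne']

theorem lyapunov_function_general (T b : ℝ) (hb : 0 < b) :
    (∀ v d : ℝ, 0 ≤ (v ^ 2 / (2 * b) - d) ^ 2) ∧
    (∀ w : ℝ, ((w : ℝ) ^ 2 / (2 * b) - w ^ 2 / (2 * b)) ^ 2 = 0) ∧
    (∀ v d w : ℝ, 0 ≤ d + T * w - T * v →
      ((Real.sqrt (2 * b * (d + T * w - T * v))) ^ 2 / (2 * b)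
          - (d + T * w - T * v)) ^ 2 = 0 ∧
      ((Real.sqrt (2 * b * (d + T * w - T * v))) ^ 2 / (2 * b)
          - (d + T * w - T * v)) ^ 2 - (v ^ 2 / (2 * b) - d) ^ 2
        = -(v ^ 2 / (2 * b) - d) ^ 2 ∧
      ((Real.sqrt (2 * b * (d + T * w - T * v))) ^ 2 / (2 * b)
          - (d + T * w - T * v)) ^ 2 - (v ^ 2 / (2 * b) - d) ^ 2 ≤ 0) := by
  refine ⟨fun v d => sq_nonneg _, fun w => by rw [sub_self, zero_pow two_ne_zero],
    fun v d w hd => ?_⟩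
  -- The controller puts the next state on the parabola `d = v² / (2b)`, where `L` vanishes.
  have h_next : (√(2 * b * (d + T * w - T * v)) ^ 2 / (2 * b)
      - (d + T * w - T * v)) ^ 2 = 0 := by
    rw [sq_sqrt_mul_div_cancel_left (by positivity) hd, sub_self, zero_pow two_ne_zero]
  rw [h_next, zero_sub]
  exact ⟨rfl, rfl, neg_nonpos.mpr (sq_nonneg _)⟩

/-- `L(v, d) = (v²/(2b) − d)²` is a Lyapunov function for the
closed-loop dynamics `g(v, d, w) = (√(2b(d + Tw − Tv)), d + Tw − Tv)`:
(i) `L ≥ 0` everywhere; (ii) `L` vanishes at every equilibrium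
`(w, w²/(2b))`; (iii) for every state `(v, d)` and input `w` with
`d + Tw − Tv ≥ 0`, `L(g(v, d, w)) = 0`, hence
`L(g(v, d, w)) − L(v, d) = −(v²/(2b) − d)² ≤ 0` — so the equilibrium
`(w, w²/(2b))` is stable in the sense of Lyapunov. -/
theorem lyapunov_function (T b : ℝ) (hT : 0 < T) (hb : 0 < b) :
    (∀ v d : ℝ, 0 ≤ (v ^ 2 / (2 * b) - d) ^ 2) ∧
    (∀ w : ℝ, ((w : ℝ) ^ 2 / (2 * b) - w ^ 2 / (2 * b)) ^ 2 = 0) ∧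
    (∀ v d w : ℝ, 0 ≤ d + T * w - T * v →
      ((Real.sqrt (2 * b * (d + T * w - T * v))) ^ 2 / (2 * b)
          - (d + T * w - T * v)) ^ 2 = 0 ∧
      ((Real.sqrt (2 * b * (d + T * w - T * v))) ^ 2 / (2 * b)
          - (d + T * w - T * v)) ^ 2 - (v ^ 2 / (2 * b) - d) ^ 2
        = -(v ^ 2 / (2 * b) - d) ^ 2 ∧
      ((Real.sqrt (2 * b * (d + T * w - T * v))) ^ 2 / (2 * b)
          - (d + T * w - T * v)) ^ 2 - (v ^ 2 / (2 * b) - d) ^ 2 ≤ 0) :=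
  lyapunov_function_general T b hb
end
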